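/- arXiv:1105.5763 — 5 statements merged into one kernel-verified Lean document; each statement's English description precedes it below -/
import Mathlib

section
/- Let γ = ((i₁ j₁),…,(i_k j_k)) ∈ Σ_n(k) and let l, m ∈ {1,…,k} with l < m. If j_l = j_m, then i_l > i_m. -/
/-- ℓ(σ): the number of cycles (orbits) of σ, including fixed points, counted via the
minimal representative of each orbit. -/
noncomputable def cycleCount {n : ℕ} (σ : Equiv.Perm (Fin n)) : ℕ :=
  Set.ncard {x : Fin n | ∀ y, σ.SameCycle x y → x ≤ y}

/-- |σ| := n − ℓ(σ). -/
noncomputable def normPerm {n : ℕ} (σ : Equiv.Perm (Fin n)) : ℕ := n - cycleCount σ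

/-- σ₁ ≼ σ₂ iff |σ₂| = |σ₁| + |σ₁⁻¹σ₂|. -/
def precLe {n : ℕ} (σ₁ σ₂ : Equiv.Perm (Fin n)) : Prop :=
  normPerm σ₂ = normPerm σ₁ + normPerm (σ₁⁻¹ * σ₂)

/-- Σ_n(k): tuples of k transpositions with |τ₁⋯τ_k| = k and τ₁⋯τ_k ≼ (1 … n). -/
def SigmaSet (n k : ℕ) : Set (Fin k → Equiv.Perm (Fin n)) :=
  {τ | (∀ l, (τ l).IsSwap) ∧ normPerm (List.ofFn τ).prod = k ∧
      precLe (List.ofFn τ).prod (finRotate n)}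

/-- γ_m := τ₁∘⋯∘τ_m, the product of the first m entries of the chain. -/
def gammaP {n k : ℕ} (τ : Fin k → Equiv.Perm (Fin n)) (m : ℕ) : Equiv.Perm (Fin n) :=
  ((List.ofFn τ).take m).prod

/-!
Write `γ_t = τ₁ ⋯ τ_t`. Since `|·|` is subadditive and `|τ| = 1` for a transposition, the
condition `|γ_k| = k` forces `|γ_t| = t` for all `t`: every step glues two distinct cycles of
`γ_{t-1}`, and every `γ_t` lies below `c`. A permutation below `c` has increasing cycles: `σ x`
is the first point of the cycle of `x` met when walking from `x` in the direction of `c`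
(induction on `|σ⁻¹ c|`, splitting off one transposition of `σ⁻¹ c` at a time).
At step `m`, `i_l` lies in the cycle of `j_m = j_l` in `γ_{m-1}` while `i_m` does not. If
`i_l < i_m < j_m`, the increasing cycles of `γ_{m-1}` put `γ_{m-1}(j_m)` on the arc from `j_m`
to `i_l`, and those of `γ_m = γ_{m-1} (i_m j_m)`, which sends `i_m` to `γ_{m-1}(j_m)`, put it on
the arc from `i_m` to `j_m`; these arcs are disjoint.
-/

open Equiv

namespace Equiv.Perm

section SameCycle

variable {α : Type*} [Finite α] {f : Perm α} {x y : α}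

theorem SameCycle.mem_of_apply_mem {S : Set α} (hxy : f.SameCycle x y) (hx : x ∈ S)
    (hS : ∀ z ∈ S, f.SameCycle x z → f z ∈ S) : y ∈ S := by
  obtain ⟨t, -, rfl⟩ := hxy.exists_pow_eq'
  clear hxy
  induction t with
  | zero => exact hx
  | succ t ih =>
    rw [pow_succ', mul_apply]
    exact hS _ ih ((SameCycle.refl f x).pow_right)

variable [DecidableEq α] {σ : Perm α} {a b : α}

theorem sameCycle_mul_swap_of_not_sameCycle (hab : ¬σ.SameCycle a b) :
    (σ * swap a b).SameCycle a b := by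
  by_contra h
  have hb : σ.SameCycle (σ b) b := sameCycle_apply_left.2 (SameCycle.refl σ b)
  refine h (hb.mem_of_apply_mem (S := {w | (σ * swap a b).SameCycle a w}) ?_ ?_)
  · exact ⟨1, by simp⟩
  · intro w hw hbw
    have hwa : w ≠ a := by rintro rfl; exact hab (sameCycle_apply_left.1 hbw).symm
    have hwb : w ≠ b := by rintro rfl; exact h hw
    have hσw : (σ * swap a b) w = σ w := by rw [mul_apply, swap_apply_of_ne_of_ne hwa hwb]
    exact hσw ▸ SameCycle.apply_right hw

theorem SameCycle.mul_swap_of_not_sameCycle (hab : ¬σ.SameCycle a b) (hxy : σ.SameCycle x y) :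
    (σ * swap a b).SameCycle x y := by
  refine hxy.mem_of_apply_mem (S := {w | (σ * swap a b).SameCycle x w}) (SameCycle.refl _ _) ?_
  intro w hw _
  have hw' : (σ * swap a b).SameCycle x (swap a b w) := by
    have hmerge := sameCycle_mul_swap_of_not_sameCycle hab
    rcases eq_or_ne w a with rfl | hwa
    · rw [swap_apply_left]; exact SameCycle.trans hw hmerge
    rcases eq_or_ne w b with rfl | hwb
    · rw [swap_apply_right]; exact SameCycle.trans hw hmerge.symm
    · rwa [swap_apply_of_ne_of_ne hwa hwb]
  show (σ * swap a b).SameCycle x (σ w)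
  simpa only [mul_apply, swap_apply_self] using hw'.apply_right

theorem SameCycle.of_mul_swap_of_not_sameCycle (ha : ¬σ.SameCycle x a) (hb : ¬σ.SameCycle x b)
    (hxy : (σ * swap a b).SameCycle x y) : σ.SameCycle x y := by
  refine hxy.mem_of_apply_mem (S := {w | σ.SameCycle x w}) (SameCycle.refl _ _) ?_
  intro w hw _
  have hwa : w ≠ a := by rintro rfl; exact ha hw
  have hwb : w ≠ b := by rintro rfl; exact hb hw
  rw [mul_apply, swap_apply_of_ne_of_ne hwa hwb]
  exact SameCycle.apply_right hw

theorem sameCycle_or_sameCycle_of_mul_swap (hxy : (σ * swap a b).SameCycle x y)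
    (hx : σ.SameCycle a x ∨ σ.SameCycle b x) : σ.SameCycle a y ∨ σ.SameCycle b y := by
  refine hxy.mem_of_apply_mem (S := {w | σ.SameCycle a w ∨ σ.SameCycle b w}) hx ?_
  intro w hw _
  have hw' : σ.SameCycle a (swap a b w) ∨ σ.SameCycle b (swap a b w) := by
    rw [swap_apply_def]
    split_ifs
    · exact Or.inr (SameCycle.refl _ _)
    · exact Or.inl (SameCycle.refl _ _)
    · exact hw
  rw [mul_apply]
  exact hw'.imp SameCycle.apply_right SameCycle.apply_right

theorem not_sameCycle_mul_swap_of_sameCycle (hab : a ≠ b) (h : σ.SameCycle a b) :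
    ¬(σ * swap a b).SameCycle a b := by
  have hex : ∃ q, (σ ^ q) (σ b) = a :=
    let ⟨q, _, hq⟩ := (sameCycle_apply_left.2 h.symm).exists_pow_eq'
    ⟨q, hq⟩
  set q := Nat.find hex
  -- the `σ`-walk from `σ b` reaches `a` before it returns to `b`
  have hb : ∀ i ≤ q, (σ ^ i) (σ b) ≠ b := by
    intro i hi hib
    have hiq : i < q := hi.lt_of_ne fun hiq => hab ((Nat.find_spec hex).symm.trans (by rwa [hiq] at hib))
    refine Nat.find_min hex (m := q - i - 1) (by omega) ?_
    calc (σ ^ (q - i - 1)) (σ b) = (σ ^ (q - i)) ((σ ^ i) (σ b)) := by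
          rw [hib, ← mul_apply, ← pow_succ, Nat.sub_add_cancel (by omega)]
      _ = a := by rw [← mul_apply, ← pow_add, Nat.sub_add_cancel hi, Nat.find_spec hex]
  intro h'
  obtain ⟨i, hi, hib⟩ : b ∈ {w | ∃ i ≤ q, (σ ^ i) (σ b) = w} := by
    refine h'.mem_of_apply_mem ⟨q, le_rfl, Nat.find_spec hex⟩ ?_
    rintro _ ⟨i, hi, rfl⟩ -
    rcases hi.lt_or_eq with hi | rfl
    · refine ⟨i + 1, hi, ?_⟩
      rw [mul_apply, swap_apply_of_ne_of_ne (Nat.find_min hex hi) (hb i hi.le), pow_succ',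
        mul_apply]
    · exact ⟨0, q.zero_le, by rw [mul_apply, Nat.find_spec hex, swap_apply_left, pow_zero,
        one_apply]⟩
  exact hb i hi hib

end SameCycle

section CycleMins

variable {α : Type*} [LinearOrder α] {σ : Perm α} {a b x y : α}

def cycleMins (σ : Perm α) : Set α := {x | ∀ y, σ.SameCycle x y → x ≤ y}

theorem eq_of_mem_cycleMins (hx : x ∈ cycleMins σ) (hy : y ∈ cycleMins σ)
    (h : σ.SameCycle x y) : x = y :=
  le_antisymm (hx y h) (hy x h.symm)

theorem mem_cycleMins_one (x : α) : x ∈ cycleMins (1 : Perm α) :=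
  fun _ hy => (sameCycle_one.1 hy).le

theorem eq_one_of_forall_mem_cycleMins (h : ∀ x, x ∈ cycleMins σ) : σ = 1 :=
  Perm.ext fun x => eq_of_mem_cycleMins (h (σ x)) (h x) (sameCycle_apply_left.2 (SameCycle.refl σ x))

variable [Finite α]

theorem exists_mem_cycleMins_sameCycle (σ : Perm α) (x : α) :
    ∃ z ∈ cycleMins σ, σ.SameCycle x z := by
  obtain ⟨z, hz, hmin⟩ := Set.exists_min_image {y | σ.SameCycle x y} id (Set.toFinite _)
    ⟨x, SameCycle.refl σ x⟩
  exact ⟨z, fun y hy => hmin y (SameCycle.trans hz hy), hz⟩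

/-- Gluing the cycles of `a` and `b` removes exactly one cycle minimum, the larger of the two. -/
theorem cycleMins_eq_insert_cycleMins_mul_swap (hab : ¬σ.SameCycle a b) :
    ∃ M ∉ cycleMins (σ * swap a b), cycleMins σ = insert M (cycleMins (σ * swap a b)) := by
  obtain ⟨A, hA, haA⟩ := exists_mem_cycleMins_sameCycle σ a
  obtain ⟨B, hB, hbB⟩ := exists_mem_cycleMins_sameCycle σ b
  have hAB : A ≠ B := by rintro rfl; exact hab (haA.trans hbB.symm)
  have hmerge : (σ * swap a b).SameCycle A B :=
    (haA.symm.mul_swap_of_not_sameCycle hab).trans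
      ((sameCycle_mul_swap_of_not_sameCycle hab).trans (hbB.mul_swap_of_not_sameCycle hab))
  refine ⟨max A B, fun hM => ?_, ?_⟩
  · rcases le_total A B with h | h
    · rw [max_eq_right h] at hM; exact hAB (le_antisymm h (hM A hmerge.symm))
    · rw [max_eq_left h] at hM; exact hAB (le_antisymm (hM B hmerge) h)
  ext z
  rw [Set.mem_insert_iff]
  constructor
  · intro hz
    by_cases hC : σ.SameCycle a z ∨ σ.SameCycle b z
    · by_cases hzAB : z ≤ A ∧ z ≤ B
      · refine Or.inr fun y hy => ?_
        rcases sameCycle_or_sameCycle_of_mul_swap hy hC with h | h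
        exacts [hzAB.1.trans (hA y (haA.symm.trans h)), hzAB.2.trans (hB y (hbB.symm.trans h))]
      · refine Or.inl ?_
        rcases hC with h | h
        · obtain rfl := eq_of_mem_cycleMins hz hA (h.symm.trans haA)
          exact (max_eq_left (not_le.1 fun h' => hzAB ⟨le_rfl, h'⟩).le).symm
        · obtain rfl := eq_of_mem_cycleMins hz hB (h.symm.trans hbB)
          exact (max_eq_right (not_le.1 fun h' => hzAB ⟨h', le_rfl⟩).le).symm
    · exact Or.inr fun y hy => hz y (hy.of_mul_swap_of_not_sameCycle
        (fun h => hC (Or.inl h.symm)) (fun h => hC (Or.inr h.symm)))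
  · rintro (rfl | hz)
    · rcases max_choice A B with h | h <;> rw [h] <;> assumption
    · exact fun y hy => hz y (hy.mul_swap_of_not_sameCycle hab)

end CycleMins

end Equiv.Perm

open Perm

section NormPerm

variable {n : ℕ} {σ : Perm (Fin n)} {a b : Fin n}

theorem cycleCount_le (σ : Perm (Fin n)) : cycleCount σ ≤ n :=
  (Set.ncard_le_card _).trans (Nat.card_eq_fintype_card.trans (Fintype.card_fin n)).le

theorem cycleCount_mul_swap_of_not_sameCycle (hab : ¬σ.SameCycle a b) :
    cycleCount (σ * swap a b) + 1 = cycleCount σ := by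
  obtain ⟨M, hM, h⟩ := cycleMins_eq_insert_cycleMins_mul_swap hab
  change (cycleMins _).ncard + 1 = (cycleMins σ).ncard
  rw [h, Set.ncard_insert_of_notMem hM]

theorem normPerm_one : normPerm (1 : Perm (Fin n)) = 0 := by
  have h : cycleMins (1 : Perm (Fin n)) = Set.univ := Set.eq_univ_of_forall mem_cycleMins_one
  rw [normPerm, cycleCount, ← cycleMins, h, Set.ncard_univ, Nat.card_eq_fintype_card,
    Fintype.card_fin, Nat.sub_self]

theorem eq_one_of_normPerm_eq_zero (h : normPerm σ = 0) : σ = 1 := by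
  have hle := cycleCount_le σ
  have huniv : cycleMins σ = Set.univ := by
    refine Set.eq_of_subset_of_ncard_le (Set.subset_univ _) ?_
    rw [Set.ncard_univ, Nat.card_eq_fintype_card, Fintype.card_fin]
    unfold normPerm at h
    change n ≤ cycleCount σ
    omega
  exact eq_one_of_forall_mem_cycleMins fun x => huniv ▸ Set.mem_univ x

theorem normPerm_mul_swap_of_not_sameCycle (hab : ¬σ.SameCycle a b) :
    normPerm (σ * swap a b) = normPerm σ + 1 := by
  have h := cycleCount_mul_swap_of_not_sameCycle hab
  have hle := cycleCount_le σ
  unfold normPerm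
  omega

theorem normPerm_mul_swap_of_sameCycle (hab : a ≠ b) (h : σ.SameCycle a b) :
    normPerm (σ * swap a b) + 1 = normPerm σ := by
  have h' := normPerm_mul_swap_of_not_sameCycle (not_sameCycle_mul_swap_of_sameCycle hab h)
  rwa [mul_swap_mul_self, eq_comm] at h'

theorem normPerm_swap_mul_of_sameCycle (hab : a ≠ b) (h : σ.SameCycle a b) :
    normPerm (swap a b * σ) + 1 = normPerm σ := by
  rw [swap_mul_eq_mul_swap, Perm.inv_def]
  exact normPerm_mul_swap_of_sameCycle (σ.symm.injective.ne hab)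
    (sameCycle_symm_apply_left.2 (sameCycle_symm_apply_right.2 h))

theorem normPerm_mul_swap_le (σ : Perm (Fin n)) (a b : Fin n) :
    normPerm (σ * swap a b) ≤ normPerm σ + 1 := by
  rcases eq_or_ne a b with rfl | hab
  · rw [swap_self, ← Perm.one_def, mul_one]
    omega
  by_cases h : σ.SameCycle a b
  · have := normPerm_mul_swap_of_sameCycle hab h
    omega
  · exact (normPerm_mul_swap_of_not_sameCycle h).le

theorem not_sameCycle_of_normPerm_lt (h : normPerm σ < normPerm (σ * swap a b)) :
    ¬σ.SameCycle a b := by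
  intro hsc
  rcases eq_or_ne a b with rfl | hab
  · rw [swap_self, ← Perm.one_def, mul_one] at h
    exact h.false
  have := normPerm_mul_swap_of_sameCycle hab hsc
  omega

theorem normPerm_mul_le (σ ρ : Perm (Fin n)) : normPerm (σ * ρ) ≤ normPerm σ + normPerm ρ := by
  induction hd : normPerm ρ using Nat.strong_induction_on generalizing ρ with
  | _ d ih =>
  by_cases hρ : ρ = 1
  · simp [hρ]
  obtain ⟨x, hx⟩ : ∃ x, ρ x ≠ x := not_forall.1 fun h => hρ (Perm.ext h)
  have hsplit := normPerm_mul_swap_of_sameCycle (Ne.symm hx)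
    (sameCycle_apply_right.2 (SameCycle.refl ρ x))
  have hσρ := normPerm_mul_swap_le (σ * (ρ * swap x (ρ x))) x (ρ x)
  rw [mul_assoc, mul_swap_mul_self] at hσρ
  have := ih _ (by omega) (ρ * swap x (ρ x)) rfl
  omega

theorem normPerm_swap (hab : a ≠ b) : normPerm (swap a b) = 1 := by
  have h := normPerm_mul_swap_of_not_sameCycle (σ := 1) (fun h => hab (sameCycle_one.1 h))
  rwa [one_mul, normPerm_one] at h

theorem normPerm_list_prod_le (L : List (Perm (Fin n))) (hL : ∀ τ ∈ L, τ.IsSwap) :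
    normPerm L.prod ≤ L.length := by
  induction L with
  | nil => simp [normPerm_one]
  | cons τ L ih =>
    obtain ⟨a, b, hab, rfl⟩ := hL τ List.mem_cons_self
    have := normPerm_mul_le (swap a b) L.prod
    have := ih fun τ hτ => hL τ (List.mem_cons_of_mem _ hτ)
    rw [List.prod_cons, List.length_cons]
    rw [normPerm_swap hab] at *
    omega

theorem precLe.trans {σ₁ σ₂ σ₃ : Perm (Fin n)} (h₁₂ : precLe σ₁ σ₂) (h₂₃ : precLe σ₂ σ₃) :
    precLe σ₁ σ₃ := by
  have h₁ := normPerm_mul_le (σ₁⁻¹ * σ₂) (σ₂⁻¹ * σ₃)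
  have h₂ := normPerm_mul_le σ₁ (σ₁⁻¹ * σ₃)
  rw [mul_assoc, mul_inv_cancel_left] at h₁
  rw [mul_inv_cancel_left] at h₂
  unfold precLe at *
  omega

theorem precLe_mul_swap_of_sameCycle {π : Perm (Fin n)} (h : precLe σ π) (hab : a ≠ b)
    (hρ : (σ⁻¹ * π).SameCycle a b) :
    ¬σ.SameCycle a b ∧ precLe (σ * swap a b) π ∧
      normPerm ((σ * swap a b)⁻¹ * π) + 1 = normPerm (σ⁻¹ * π) := by
  have hsplit : normPerm ((σ * swap a b)⁻¹ * π) + 1 = normPerm (σ⁻¹ * π) := by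
    rw [mul_inv_rev, swap_inv, mul_assoc]
    exact normPerm_swap_mul_of_sameCycle hab hρ
  have htri := normPerm_mul_le (σ * swap a b) ((σ * swap a b)⁻¹ * π)
  rw [mul_inv_cancel_left] at htri
  have hle := normPerm_mul_swap_le σ a b
  unfold precLe at h ⊢
  exact ⟨not_sameCycle_of_normPerm_lt (by omega), by omega, hsplit⟩

end NormPerm

section IncreasingCycles

variable {n : ℕ} {σ : Perm (Fin n)} {a b x y : Fin n}

/-- `(y - x).val` is the distance from `x` to `y` walking around `Fin n` in the direction of
`finRotate n`: `σ x` is the nearest point of the cycle of `x` in that direction. -/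
def HasIncreasingCycles (σ : Perm (Fin n)) : Prop :=
  ∀ x y, σ.SameCycle x y → y ≠ x → (σ x - x).val ≤ (y - x).val

theorem hasIncreasingCycles_finRotate (n : ℕ) : HasIncreasingCycles (finRotate n) := by
  intro x y _ hyx
  cases n with
  | zero => exact x.elim0
  | succ n =>
    have hone : (1 : Fin (n + 1)).val ≤ 1 := by
      rw [Fin.val_one']
      exact Nat.mod_le _ _
    rw [finRotate_apply, add_sub_cancel_left]
    fin_omega

theorem HasIncreasingCycles.val_sub_le_of_mul_swap (hσ' : HasIncreasingCycles (σ * swap a b))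
    (hab : ¬σ.SameCycle a b) (hay : σ.SameCycle a y) (hya : y ≠ a) :
    (σ a - a).val ≤ (y - a).val := by
  -- along the `σ`-walk from `σ a`, each step goes to the next point of a cycle of
  -- `σ * swap a b` that contains `a`, so it cannot jump over `a`
  have walk : ∀ t : ℕ, (σ ^ t) (σ a) = a ∨ (σ a - a).val ≤ ((σ ^ t) (σ a) - a).val := by
    intro t
    induction t with
    | zero => exact Or.inr le_rfl
    | succ t ih =>
      have haw : σ.SameCycle a ((σ ^ t) (σ a)) :=
        (sameCycle_apply_right.2 (SameCycle.refl σ a)).pow_right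
      rw [pow_succ', mul_apply]
      generalize (σ ^ t) (σ a) = w at ih haw
      rcases eq_or_ne w a with rfl | hwa
      · exact Or.inr le_rfl
      have hwb : w ≠ b := fun h => hab (h ▸ haw)
      have hstep : (σ w - w).val ≤ (a - w).val := by
        have := hσ' w a (haw.symm.mul_swap_of_not_sameCycle hab) hwa.symm
        rwa [mul_apply, swap_apply_of_ne_of_ne hwa hwb] at this
      have hprev := ih.resolve_left hwa
      fin_omega
  obtain ⟨t, -, rfl⟩ := (sameCycle_apply_left.2 hay).exists_pow_eq'
  exact (walk t).resolve_left hya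

theorem HasIncreasingCycles.of_mul_swap (hσ' : HasIncreasingCycles (σ * swap a b))
    (hab : ¬σ.SameCycle a b) : HasIncreasingCycles σ := by
  intro x y hxy hyx
  rcases eq_or_ne x a with rfl | hxa
  · exact hσ'.val_sub_le_of_mul_swap hab hxy hyx
  rcases eq_or_ne x b with rfl | hxb
  · rw [swap_comm] at hσ'
    exact hσ'.val_sub_le_of_mul_swap (fun h => hab h.symm) hxy hyx
  · have := hσ' x y (hxy.mul_swap_of_not_sameCycle hab) hyx
    rwa [mul_apply, swap_apply_of_ne_of_ne hxa hxb] at this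

theorem hasIncreasingCycles_of_precLe_finRotate (h : precLe σ (finRotate n)) :
    HasIncreasingCycles σ := by
  induction hd : normPerm (σ⁻¹ * finRotate n) using Nat.strong_induction_on generalizing σ with
  | _ d ih =>
  by_cases hρ : σ⁻¹ * finRotate n = 1
  · rw [inv_mul_eq_one.1 hρ]
    exact hasIncreasingCycles_finRotate n
  obtain ⟨a, ha⟩ : ∃ a, (σ⁻¹ * finRotate n) a ≠ a := not_forall.1 fun h' => hρ (Perm.ext h')
  obtain ⟨hab, hprec, hd'⟩ :=
    precLe_mul_swap_of_sameCycle h (Ne.symm ha) (sameCycle_apply_right.2 (SameCycle.refl _ a))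
  exact (ih _ (by omega) hprec rfl).of_mul_swap hab

theorem HasIncreasingCycles.lt_of_mul_swap (hσ : HasIncreasingCycles σ)
    (hσ' : HasIncreasingCycles (σ * swap a b)) (hab : ¬σ.SameCycle a b) (hlt : a < b)
    (hxb : σ.SameCycle x b) (hx : x < b) : a < x := by
  have hxa : x ≠ a := by rintro rfl; exact hab hxb
  have hfix : σ b ≠ b := fun h => hx.ne (hxb.eq_of_right h)
  have h₁ : (σ b - b).val ≤ (x - b).val := hσ b x hxb.symm hx.ne
  have h₂ : (σ b - a).val ≤ (b - a).val := by
    simpa only [mul_apply, swap_apply_left] using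
      hσ' a b (sameCycle_mul_swap_of_not_sameCycle hab) hlt.ne'
  fin_omega

end IncreasingCycles

section Chain

variable {n k : ℕ} {τ : Fin k → Perm (Fin n)} {a b x y : Fin n}

theorem gammaP_succ (τ : Fin k → Perm (Fin n)) (t : Fin k) :
    gammaP τ (t + 1) = gammaP τ t * τ t := by
  rw [gammaP, gammaP, List.prod_take_succ _ _ (by simp), List.getElem_ofFn]

theorem normPerm_gammaP (hτ : ∀ l, (τ l).IsSwap) (hk : normPerm (List.ofFn τ).prod = k)
    {t : ℕ} (ht : t ≤ k) :
    normPerm (gammaP τ t) = t ∧ normPerm ((gammaP τ t)⁻¹ * (List.ofFn τ).prod) = k - t := by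
  have hswap : ∀ σ ∈ List.ofFn τ, σ.IsSwap := by
    simpa only [List.forall_mem_ofFn_iff] using hτ
  have htake : normPerm (gammaP τ t) ≤ t :=
    (normPerm_list_prod_le _ fun σ hσ => hswap σ (List.mem_of_mem_take hσ)).trans (by simp)
  have hdrop : normPerm ((gammaP τ t)⁻¹ * (List.ofFn τ).prod) ≤ k - t := by
    rw [gammaP, ← List.prod_take_mul_prod_drop (List.ofFn τ) t, inv_mul_cancel_left]
    exact (normPerm_list_prod_le _ fun σ hσ => hswap σ (List.mem_of_mem_drop hσ)).trans (by simp)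
  have htri := normPerm_mul_le (gammaP τ t) ((gammaP τ t)⁻¹ * (List.ofFn τ).prod)
  rw [mul_inv_cancel_left, hk] at htri
  omega

theorem precLe_gammaP (hτ : ∀ l, (τ l).IsSwap) (hk : normPerm (List.ofFn τ).prod = k)
    {t : ℕ} (ht : t ≤ k) : precLe (gammaP τ t) (List.ofFn τ).prod := by
  obtain ⟨h₁, h₂⟩ := normPerm_gammaP hτ hk ht
  unfold precLe
  omega

theorem not_sameCycle_gammaP (hτ : ∀ l, (τ l).IsSwap) (hk : normPerm (List.ofFn τ).prod = k)
    (t : Fin k) (hab : τ t = swap a b) : ¬(gammaP τ t).SameCycle a b := by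
  apply not_sameCycle_of_normPerm_lt
  rw [← hab, ← gammaP_succ, (normPerm_gammaP hτ hk t.isLt).1, (normPerm_gammaP hτ hk t.isLt.le).1]
  omega

theorem sameCycle_gammaP_succ (hτ : ∀ l, (τ l).IsSwap) (hk : normPerm (List.ofFn τ).prod = k)
    (t : Fin k) (hab : τ t = swap a b) : (gammaP τ (t + 1)).SameCycle a b := by
  rw [gammaP_succ, hab]
  exact sameCycle_mul_swap_of_not_sameCycle (not_sameCycle_gammaP hτ hk t hab)

theorem Equiv.Perm.SameCycle.gammaP_mono (hτ : ∀ l, (τ l).IsSwap) (hk : normPerm (List.ofFn τ).prod = k)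
    {s t : ℕ} (h : (gammaP τ s).SameCycle x y) (hst : s ≤ t) (ht : t ≤ k) :
    (gammaP τ t).SameCycle x y := by
  induction t, hst using Nat.le_induction with
  | base => exact h
  | succ t _ ih =>
    obtain ⟨a, b, -, hab⟩ := hτ ⟨t, ht⟩
    rw [gammaP_succ τ ⟨t, ht⟩, hab]
    exact (ih (by omega)).mul_swap_of_not_sameCycle (not_sameCycle_gammaP hτ hk ⟨t, ht⟩ hab)

end Chain

/-- If γ = ((i₁ j₁),…,(i_k j_k)) ∈ Σ_n(k), l < m and j_l = j_m, then i_l > i_m. -/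
theorem stmt9 (n k : ℕ) (i j : Fin k → Fin n) (hij : ∀ l, i l < j l)
    (hγ : (fun l => Equiv.swap (i l) (j l)) ∈ SigmaSet n k)
    (l m : Fin k) (hlm : l < m) (h : j l = j m) :
    i m < i l := by
  obtain ⟨hτ, hk, hc⟩ := hγ
  set τ : Fin k → Perm (Fin n) := fun l => swap (i l) (j l)
  have hinc : ∀ t ≤ k, HasIncreasingCycles (gammaP τ t) :=
    fun t ht => hasIncreasingCycles_of_precLe_finRotate ((precLe_gammaP hτ hk ht).trans hc)
  have hl : (gammaP τ m).SameCycle (i l) (j m) := by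
    rw [← h]
    exact (sameCycle_gammaP_succ hτ hk l rfl).gammaP_mono hτ hk hlm m.isLt.le
  have hm := hinc (m + 1) m.isLt
  rw [gammaP_succ] at hm
  exact (hinc m m.isLt.le).lt_of_mul_swap hm (not_sameCycle_gammaP hτ hk m rfl) (hij m) hl
    (h ▸ hij l)
end

section
/- Let ((i₁ j₁),…,(i_k j_k)) be an element of Σ_n(k). Then the reversed and reflected chain ((n+1−j_k, n+1−i_k),…,(n+1−j₁, n+1−i₁)) is also an element of Σ_n(k). (Note n+1−j_l < n+1−i_l, so these pairs again denote transpositions written with smaller entry first.) -/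
/-!
Write φ for `Fin.revPerm`, the reflection x ↦ n + 1 − x, and σ for the product of the chain.
Since transpositions are involutions and φ (a b) φ⁻¹ = (φ a φ b), the reflected chain is
m ↦ φ τ_{k+1−m}⁻¹ φ⁻¹, whose product is φ σ⁻¹ φ⁻¹. The length |·| is invariant under
conjugation and inversion, hence |στ| = |τσ|, which makes ≼ invariant under conjugating both
sides and under inverting both sides. As φ c φ⁻¹ = c⁻¹, we get φ σ⁻¹ φ⁻¹ ≼ φ c⁻¹ φ⁻¹ = c.
-/

open Equiv Equiv.Perm

namespace Equiv.Perm

variable {α : Type*} [DecidableEq α]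

theorem IsSwap.inv {σ : Perm α} (h : σ.IsSwap) : σ⁻¹.IsSwap := by
  obtain ⟨x, y, hxy, rfl⟩ := h
  exact ⟨x, y, hxy, swap_inv x y⟩

theorem IsSwap.conj {σ : Perm α} (h : σ.IsSwap) (π : Perm α) : (π * σ * π⁻¹).IsSwap := by
  obtain ⟨x, y, hxy, rfl⟩ := h
  exact ⟨π x, π y, π.injective.ne hxy, (swap_apply_apply π x y).symm⟩

end Equiv.Perm

section ChainProducts

variable {G : Type*} [Group G] {k : ℕ}

theorem List.ofFn_comp_rev {β : Type*} (f : Fin k → β) :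
    List.ofFn (fun m => f m.rev) = (List.ofFn f).reverse := by
  refine List.ext_getElem (by simp) fun l h₁ h₂ => ?_
  simp only [List.getElem_ofFn, List.getElem_reverse, List.length_ofFn]
  congr 1
  ext
  simp only [List.length_ofFn] at h₁
  simp only [Fin.val_rev]
  omega

theorem List.prod_ofFn_conj (g : G) (f : Fin k → G) :
    (List.ofFn fun m => g * f m * g⁻¹).prod = g * (List.ofFn f).prod * g⁻¹ := by
  simpa [List.map_ofFn, Function.comp_def] using (map_list_prod (MulAut.conj g) (List.ofFn f)).symm

theorem List.prod_ofFn_inv_rev (f : Fin k → G) :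
    (List.ofFn fun m => (f m.rev)⁻¹).prod = (List.ofFn f).prod⁻¹ := by
  rw [List.prod_inv_reverse, List.map_ofFn, ← List.ofFn_comp_rev]
  rfl

end ChainProducts

section CycleCount

variable {n : ℕ}

theorem cycleCount_eq_card_quotient (σ : Perm (Fin n)) :
    cycleCount σ = Nat.card (Quotient (SameCycle.setoid σ)) := by
  rw [cycleCount, ← Nat.card_coe_set_eq]
  refine Nat.card_eq_of_bijective (fun x => Quotient.mk _ x.1) ⟨?_, ?_⟩
  · rintro ⟨x, hx⟩ ⟨y, hy⟩ h
    have hxy : σ.SameCycle x y := Quotient.exact h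
    exact Subtype.ext (le_antisymm (hx y hxy) (hy x hxy.symm))
  · refine Quotient.ind fun z => ?_
    obtain ⟨m, hzm, hmin⟩ := wellFounded_lt.has_min {y | σ.SameCycle z y} ⟨z, .refl σ z⟩
    exact ⟨⟨m, fun y hmy => not_lt.1 (hmin y (hzm.trans hmy))⟩, Quotient.sound hzm.symm⟩

theorem cycleCount_conj (σ π : Perm (Fin n)) : cycleCount (π * σ * π⁻¹) = cycleCount σ := by
  rw [cycleCount_eq_card_quotient, cycleCount_eq_card_quotient]
  exact Nat.card_congr (Quotient.congr π.symm fun _ _ => sameCycle_conj)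

theorem cycleCount_inv (σ : Perm (Fin n)) : cycleCount σ⁻¹ = cycleCount σ := by
  simp only [cycleCount, sameCycle_inv]

theorem normPerm_conj (σ π : Perm (Fin n)) : normPerm (π * σ * π⁻¹) = normPerm σ := by
  rw [normPerm, normPerm, cycleCount_conj]

theorem normPerm_inv (σ : Perm (Fin n)) : normPerm σ⁻¹ = normPerm σ := by
  rw [normPerm, normPerm, cycleCount_inv]

theorem normPerm_mul_comm (σ τ : Perm (Fin n)) : normPerm (σ * τ) = normPerm (τ * σ) := by
  rw [← normPerm_conj (σ * τ) τ, mul_assoc, mul_inv_cancel_right]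

theorem precLe_inv_inv_iff {σ τ : Perm (Fin n)} : precLe σ⁻¹ τ⁻¹ ↔ precLe σ τ := by
  have h : normPerm (σ⁻¹⁻¹ * τ⁻¹) = normPerm (σ⁻¹ * τ) := by
    rw [inv_inv, normPerm_mul_comm, ← normPerm_inv (σ⁻¹ * τ), mul_inv_rev, inv_inv]
  rw [precLe, precLe, normPerm_inv, normPerm_inv, h]

theorem precLe_conj_iff {σ τ π : Perm (Fin n)} :
    precLe (π * σ * π⁻¹) (π * τ * π⁻¹) ↔ precLe σ τ := by
  have h : (π * σ * π⁻¹)⁻¹ * (π * τ * π⁻¹) = π * (σ⁻¹ * τ) * π⁻¹ := by group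
  rw [precLe, precLe, h, normPerm_conj, normPerm_conj, normPerm_conj]

end CycleCount

theorem Fin.revPerm_mul_finRotate_mul_revPerm_inv (n : ℕ) :
    (Fin.revPerm : Perm (Fin n)) * finRotate n * Fin.revPerm⁻¹ = (finRotate n)⁻¹ := by
  refine eq_inv_of_mul_eq_one_left (Equiv.ext fun x => ?_)
  obtain _ | m := n
  · exact x.elim0
  · have hx := x.isLt
    simp only [Perm.mul_apply, Perm.one_apply, Perm.inv_def, Fin.revPerm_symm, Fin.revPerm_apply,
      finRotate_apply, Fin.ext_iff, Fin.val_add_one, Fin.val_rev, Fin.val_last]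
    split_ifs <;> omega

theorem conj_inv_rev_mem_sigmaSet {n k : ℕ} {τ : Fin k → Perm (Fin n)} (hτ : τ ∈ SigmaSet n k)
    {π : Perm (Fin n)} (hπ : π * finRotate n * π⁻¹ = (finRotate n)⁻¹) :
    (fun m => π * (τ m.rev)⁻¹ * π⁻¹) ∈ SigmaSet n k := by
  obtain ⟨hswap, hnorm, hprec⟩ := hτ
  have hprod : (List.ofFn fun m => π * (τ m.rev)⁻¹ * π⁻¹).prod
      = π * (List.ofFn τ).prod⁻¹ * π⁻¹ := by
    rw [List.prod_ofFn_conj, List.prod_ofFn_inv_rev]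
  refine ⟨fun m => (hswap m.rev).inv.conj π, ?_, ?_⟩
  · rw [hprod, normPerm_conj, normPerm_inv, hnorm]
  · have hc : π * (finRotate n)⁻¹ * π⁻¹ = finRotate n := by
      rw [show π * (finRotate n)⁻¹ * π⁻¹ = (π * finRotate n * π⁻¹)⁻¹ by group, hπ, inv_inv]
    rw [hprod, ← hc, precLe_conj_iff, precLe_inv_inv_iff]
    exact hprec

theorem stmt10_general (n k : ℕ) (i j : Fin k → Fin n)
    (hγ : (fun l => Equiv.swap (i l) (j l)) ∈ SigmaSet n k) :
    (fun m : Fin k => Equiv.swap ((j m.rev).rev) ((i m.rev).rev)) ∈ SigmaSet n k := by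
  have hchain : (fun m : Fin k => swap (j m.rev).rev (i m.rev).rev)
      = fun m => Fin.revPerm * (swap (i m.rev) (j m.rev))⁻¹ * Fin.revPerm⁻¹ := by
    funext m
    rw [swap_inv, ← swap_apply_apply, swap_comm]
    rfl
  rw [hchain]
  exact conj_inv_rev_mem_sigmaSet hγ (Fin.revPerm_mul_finRotate_mul_revPerm_inv n)

/-- If ((i₁ j₁),…,(i_k j_k)) ∈ Σ_n(k), then the reversed and reflected chain
((n+1−j_k, n+1−i_k),…,(n+1−j₁, n+1−i₁)) also belongs to Σ_n(k).
(Here x ↦ n+1−x on {1,…,n} corresponds to `Fin.rev` on `Fin n`.) -/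
theorem stmt10 (n k : ℕ) (i j : Fin k → Fin n) (hij : ∀ l, i l < j l)
    (hγ : (fun l => Equiv.swap (i l) (j l)) ∈ SigmaSet n k) :
    (fun m : Fin k => Equiv.swap ((j m.rev).rev) ((i m.rev).rev)) ∈ SigmaSet n k :=
  stmt10_general n k i j hγ
end

section
/- Let γ = ((i₁ j₁),…,(i_k j_k)) ∈ Σ_n(k). Then the support of the product γ_k = (i₁ j₁)∘⋯∘(i_k j_k) equals {i₁,…,i_k} ∪ {j₁,…,j_k}. -/
/-! Multiplying a permutation by a transposition changes its number of cycles by at most one, so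
a product of `k` transpositions has at least `n - k` cycles. If it has exactly `n - k`, every
factor `(a b)` must lower the cycle count of the partial product `σ` before it. That rules out
`σ b = a` and `σ a = b`, since then `a` would become a new fixed point, so `a` and `b` are both
moved by `σ * (a b)`, while every other point is moved by it exactly when it is moved by `σ`. -/

theorem Setoid.card_quotient_le_of_forall_eq_iff {α β : Type*} {r : Setoid α} [Finite β]
    (f : α → β) (hf : ∀ x y, f x = f y ↔ r x y) : Nat.card (Quotient r) ≤ Nat.card β := by
  refine Nat.card_le_card_of_injective (Quotient.lift f fun x y h => (hf x y).2 h) ?_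
  rintro ⟨x⟩ ⟨y⟩ hxy
  exact Quotient.sound ((hf x y).1 hxy)

namespace Equiv.Perm

variable {α : Type*}

noncomputable def numCycles (σ : Perm α) : ℕ := Nat.card (Quotient (SameCycle.setoid σ))

theorem numCycles_le_card [Finite α] (σ : Perm α) : σ.numCycles ≤ Nat.card α :=
  Nat.card_le_card_of_surjective _ Quotient.mk_surjective

theorem numCycles_one [Finite α] : (1 : Perm α).numCycles = Nat.card α :=
  Nat.card_eq_of_bijective _ ⟨fun _ _ h => sameCycle_one.1 (Quotient.exact h),
    Quotient.mk_surjective⟩ |>.symm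

variable [DecidableEq α] {σ : Perm α} {a b x y : α}

theorem pow_mul_swap_apply_of_not_sameCycle (ha : ¬σ.SameCycle x a) (hb : ¬σ.SameCycle x b)
    (m : ℕ) : ((σ * swap a b) ^ m) x = (σ ^ m) x := by
  induction m with
  | zero => rfl
  | succ m ih =>
    have ha' : (σ ^ m) x ≠ a := fun h => ha ⟨m, by simpa using h⟩
    have hb' : (σ ^ m) x ≠ b := fun h => hb ⟨m, by simpa using h⟩
    rw [pow_succ', mul_apply, ih, mul_apply, swap_apply_of_ne_of_ne ha' hb', ← mul_apply,
      ← pow_succ']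

theorem sameCycle_mul_swap_iff [Finite α] (ha : ¬σ.SameCycle x a) (hb : ¬σ.SameCycle x b) :
    (σ * swap a b).SameCycle x y ↔ σ.SameCycle x y := by
  constructor <;> rintro h <;> obtain ⟨m, -, rfl⟩ := h.exists_pow_eq'
  · exact ⟨m, by rw [zpow_natCast, pow_mul_swap_apply_of_not_sameCycle ha hb]⟩
  · exact ⟨m, by rw [zpow_natCast, pow_mul_swap_apply_of_not_sameCycle ha hb]⟩

open Classical in
/-- `x ↦ if … then b else x` collapses the `σ`-cycles of `a` and `b` onto `b`. -/
theorem sameCycle_mul_swap_ite_iff [Finite α] :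
    (σ * swap a b).SameCycle (if σ.SameCycle x a ∨ σ.SameCycle x b then b else x)
      (if σ.SameCycle y a ∨ σ.SameCycle y b then b else y) ↔
      ((σ.SameCycle x a ∨ σ.SameCycle x b) ∧ (σ.SameCycle y a ∨ σ.SameCycle y b)) ∨
        σ.SameCycle x y := by
  split_ifs with hx hy hy
  · simp only [SameCycle.refl, hx, hy, and_self, true_or]
  · rw [sameCycle_comm, sameCycle_mul_swap_iff (by tauto) (by tauto)]
    grind [SameCycle.symm, SameCycle.trans]
  · rw [sameCycle_mul_swap_iff (by tauto) (by tauto)]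
    grind [SameCycle.symm, SameCycle.trans]
  · rw [sameCycle_mul_swap_iff (by tauto) (by tauto)]
    tauto

theorem numCycles_le_numCycles_mul_swap_add_one [Finite α] (σ : Perm α) (a b : α) :
    σ.numCycles ≤ (σ * swap a b).numCycles + 1 := by
  classical
  rw [numCycles, numCycles, ← Finite.card_option]
  refine Setoid.card_quotient_le_of_forall_eq_iff (fun x => if σ.SameCycle x a then none else
    some (⟦if σ.SameCycle x a ∨ σ.SameCycle x b then b else x⟧ : Quotient (SameCycle.setoid _)))
    fun x y => ?_
  change _ ↔ σ.SameCycle x y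
  by_cases hx : σ.SameCycle x a <;> by_cases hy : σ.SameCycle y a
  · simp [hx, hy, hx.trans hy.symm]
  · simpa [hx, hy] using fun hxy => hy (hxy.symm.trans hx)
  · simpa [hx, hy] using fun hxy => hx (hxy.trans hy)
  · rw [if_neg hx, if_neg hy, Option.some_inj, Quotient.eq]
    change (σ * swap a b).SameCycle _ _ ↔ _
    rw [sameCycle_mul_swap_ite_iff]
    grind [SameCycle.symm, SameCycle.trans]

theorem numCycles_add_one_le_numCycles_mul_swap [Finite α] (hab : a ≠ b) (h : σ b = a) :
    σ.numCycles + 1 ≤ (σ * swap a b).numCycles := by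
  classical
  have hσ : σ.SameCycle a b := by rw [← h, sameCycle_apply_left]
  have hπ : ¬(σ * swap a b).SameCycle a b := fun h' =>
    hab (h'.eq_of_left (by simp [Function.IsFixedPt, h]))
  let f (x : α) : {q : Quotient (SameCycle.setoid (σ * swap a b)) // q ≠ ⟦a⟧} :=
    ⟨⟦if σ.SameCycle x a ∨ σ.SameCycle x b then b else x⟧, fun hq => by
      rw [Quotient.eq] at hq
      change (σ * swap a b).SameCycle _ _ at hq
      split_ifs at hq with hx
      · exact hπ hq.symm
      · exact hx (Or.inl ((sameCycle_mul_swap_iff (by tauto) (by tauto)).1 hq))⟩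
  have := Setoid.card_quotient_le_of_forall_eq_iff (r := SameCycle.setoid σ) f fun x y => by
    rw [Subtype.ext_iff, Quotient.eq]
    change (σ * swap a b).SameCycle _ _ ↔ σ.SameCycle x y
    rw [sameCycle_mul_swap_ite_iff]
    grind [SameCycle.symm, SameCycle.trans]
  have := Finite.card_subtype_lt
    (p := fun q : Quotient (SameCycle.setoid (σ * swap a b)) => q ≠ ⟦a⟧) (x := ⟦a⟧) (by simp)
  rw [numCycles, numCycles]
  omega

theorem support_mul_swap_of_numCycles_lt [Fintype α] (hab : a ≠ b)
    (h : (σ * swap a b).numCycles < σ.numCycles) :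
    (σ * swap a b).support = σ.support ∪ {a, b} := by
  have hba : σ b ≠ a := fun h' => by
    have := numCycles_add_one_le_numCycles_mul_swap hab h'
    omega
  have hab' : σ a ≠ b := fun h' => by
    have := numCycles_add_one_le_numCycles_mul_swap hab.symm h'
    rw [swap_comm] at this
    omega
  ext x
  simp only [Finset.mem_union, Finset.mem_insert, Finset.mem_singleton, mem_support, mul_apply,
    swap_apply_def]
  grind

theorem card_le_numCycles_prod_add_length [Finite α] {l : List (Perm α)}
    (hl : ∀ τ ∈ l, τ.IsSwap) : Nat.card α ≤ l.prod.numCycles + l.length := by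
  induction l using List.reverseRecOn with
  | nil => simp [numCycles_one]
  | append_singleton l τ ih =>
    obtain ⟨a, b, -, rfl⟩ := hl τ (by simp)
    have := numCycles_le_numCycles_mul_swap_add_one l.prod a b
    have := ih fun τ hτ => hl τ (by simp [hτ])
    simp only [List.prod_append, List.prod_singleton, List.length_append, List.length_singleton]
    omega

theorem mem_support_prod_iff_of_numCycles_prod_add_length_eq [Fintype α] {l : List (Perm α)}
    (hl : ∀ τ ∈ l, τ.IsSwap) (h : l.prod.numCycles + l.length = Nat.card α) (x : α) :
    x ∈ l.prod.support ↔ ∃ τ ∈ l, x ∈ τ.support := by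
  induction l using List.reverseRecOn with
  | nil => simp
  | append_singleton l τ ih =>
    obtain ⟨a, b, hab, rfl⟩ := hl τ (by simp)
    have hl' : ∀ τ ∈ l, τ.IsSwap := fun τ hτ => hl τ (by simp [hτ])
    have := numCycles_le_numCycles_mul_swap_add_one l.prod a b
    have := card_le_numCycles_prod_add_length hl'
    simp only [List.prod_append, List.prod_singleton, List.length_append,
      List.length_singleton] at h ⊢
    rw [support_mul_swap_of_numCycles_lt hab (by omega), Finset.mem_union, ih hl' (by omega),
      ← support_swap hab]
    simp [or_and_right, exists_or]

end Equiv.Perm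

open Equiv Equiv.Perm

theorem cycleCount_eq_numCycles {n : ℕ} (σ : Perm (Fin n)) : cycleCount σ = σ.numCycles := by
  rw [cycleCount, ← Nat.card_coe_set_eq]
  refine Nat.card_eq_of_bijective (fun x => (⟦x.1⟧ : Quotient (SameCycle.setoid σ))) ⟨?_, ?_⟩
  · rintro ⟨x, hx⟩ ⟨y, hy⟩ hxy
    have h : σ.SameCycle x y := Quotient.exact hxy
    exact Subtype.ext (le_antisymm (hx y h) (hy x h.symm))
  · rintro ⟨y⟩
    obtain ⟨m, hm, hmin⟩ := Set.exists_min_image {z | σ.SameCycle y z} id (Set.toFinite _)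
      ⟨y, SameCycle.refl σ y⟩
    exact ⟨⟨m, fun z hz => hmin z (hm.trans hz)⟩, Quotient.sound hm.symm⟩

theorem stmt13_general (n k : ℕ) (i j : Fin k → Fin n)
    (hγ : (fun l => Equiv.swap (i l) (j l)) ∈ SigmaSet n k) :
    ((List.ofFn fun l => Equiv.swap (i l) (j l)).prod).support =
      Finset.image i Finset.univ ∪ Finset.image j Finset.univ := by
  obtain ⟨hswap, hnorm, -⟩ := hγ
  set L := List.ofFn fun l => swap (i l) (j l)
  have hL : ∀ τ ∈ L, τ.IsSwap := by simpa [L, List.forall_mem_ofFn_iff] using hswap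
  have hcount : L.prod.numCycles + L.length = Nat.card (Fin n) := by
    have := numCycles_le_card L.prod
    rw [normPerm, cycleCount_eq_numCycles] at hnorm
    rw [Nat.card_fin] at this ⊢
    rw [List.length_ofFn]
    omega
  have hsupp (l : Fin k) : (swap (i l) (j l)).support = {i l, j l} :=
    support_swap (swap_isSwap_iff.1 (hswap l))
  ext x
  rw [mem_support_prod_iff_of_numCycles_prod_add_length_eq hL hcount]
  simp only [L, List.mem_ofFn, exists_exists_eq_and, hsupp, Finset.mem_insert,
    Finset.mem_singleton, exists_or, Finset.mem_union, Finset.mem_image, Finset.mem_univ, true_and]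
  simp only [eq_comm]

/-- If γ = ((i₁ j₁),…,(i_k j_k)) ∈ Σ_n(k), the support of γ_k = (i₁ j₁)∘⋯∘(i_k j_k) is
{i₁,…,i_k} ∪ {j₁,…,j_k}. -/
theorem stmt13 (n k : ℕ) (i j : Fin k → Fin n) (hij : ∀ l, i l < j l)
    (hγ : (fun l => Equiv.swap (i l) (j l)) ∈ SigmaSet n k) :
    ((List.ofFn fun l => Equiv.swap (i l) (j l)).prod).support =
      Finset.image i Finset.univ ∪ Finset.image j Finset.univ :=
  stmt13_general n k i j hγ
end

section
/- Let γ = (τ₁,…,τ_k) ∈ Σ_n(k) with τ_l = (i_l j_l), and let l ∈ {1,…,k−1}. Then: (a) s_l(γ) belongs to Σ_n(k); (b) the ordered product of the entries of s_l(γ) equals τ₁∘⋯∘τ_k; (c) P(s_l(γ)) = σ_l · P(γ), where σ_l = (l, l+1) ∈ S_k acts on {1,…,n}^k by permuting coordinates; (d) if s_l(γ) = ((i′₁ j′₁),…,(i′_k j′_k)), then ⋃_{m=1}^{k} {i′_m, j′_m} = ⋃_{m=1}^{k} {i_m, j_m}. -/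
/-- The operation s_l on a chain of transpositions ((i₁ j₁),…,(i_k j_k)), acting at
consecutive positions a and b = a+1: it does nothing if i_a = i_b; if i_a < i_b it replaces
(τ_a, τ_b) by (τ_b, τ_b∘τ_a∘τ_b); if i_a > i_b it replaces it by (τ_a∘τ_b∘τ_a, τ_a). -/
def slOp {n k : ℕ} (i j : Fin k → Fin n) (a b : Fin k) : Fin k → Equiv.Perm (Fin n) :=
  fun m =>
    if i a = i b then Equiv.swap (i m) (j m)
    else if i a < i b then
      if m = a then Equiv.swap (i b) (j b)
      else if m = b then
        Equiv.swap (i b) (j b) * Equiv.swap (i a) (j a) * Equiv.swap (i b) (j b)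
      else Equiv.swap (i m) (j m)
    else
      if m = a then
        Equiv.swap (i a) (j a) * Equiv.swap (i b) (j b) * Equiv.swap (i a) (j a)
      else if m = b then Equiv.swap (i a) (j a)
      else Equiv.swap (i m) (j m)

theorem prodPairAux {M : Type*} [Monoid M] {k : ℕ} (f g : Fin k → M) (a b : Fin k)
    (hab : (b : ℕ) = (a : ℕ) + 1) (hoth : ∀ m, m ≠ a → m ≠ b → g m = f m)
    (hp : g a * g b = f a * f b) :
    (List.ofFn g).prod = (List.ofFn f).prod := by
  have hbk : (a : ℕ) + 1 < k := hab ▸ b.isLt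
  have key : ∀ h : Fin k → M,
      (List.ofFn h).prod =
        ((List.ofFn h).take a).prod * (h a * h b) * ((List.ofFn h).drop ((a : ℕ) + 2)).prod := by
    intro h
    have h1 : ((List.ofFn h).take ((a : ℕ) + 2)).prod * ((List.ofFn h).drop ((a : ℕ) + 2)).prod
        = (List.ofFn h).prod := List.prod_take_mul_prod_drop _ _
    have l1 : (a : ℕ) + 1 < (List.ofFn h).length := by simpa using hbk
    have l0 : (a : ℕ) < (List.ofFn h).length := by omega
    have h2 : ((List.ofFn h).take ((a : ℕ) + 1 + 1)).prod
        = ((List.ofFn h).take ((a : ℕ) + 1)).prod * (List.ofFn h)[(a : ℕ) + 1] :=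
      List.prod_take_succ _ _ l1
    have h3 : ((List.ofFn h).take ((a : ℕ) + 1)).prod
        = ((List.ofFn h).take (a : ℕ)).prod * (List.ofFn h)[(a : ℕ)] :=
      List.prod_take_succ _ _ l0
    have e1 : (List.ofFn h)[(a : ℕ)] = h a := by simp
    have e2 : (List.ofFn h)[(a : ℕ) + 1] = h b := by
      rw [List.getElem_ofFn]
      congr 1
      exact Fin.ext (by simp [hab])
    rw [← h1, show (a : ℕ) + 2 = (a : ℕ) + 1 + 1 from rfl, h2, h3, e1, e2]
    simp [mul_assoc]
  have htake : (List.ofFn g).take a = (List.ofFn f).take a := by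
    apply List.ext_getElem
    · simp
    · intro m hm hm'
      have hml : m < (a : ℕ) := by simp at hm; omega
      rw [List.getElem_take, List.getElem_take, List.getElem_ofFn, List.getElem_ofFn]
      apply hoth
      · exact fun hc => by simp [Fin.ext_iff] at hc; omega
      · exact fun hc => by simp [Fin.ext_iff, hab] at hc; omega
  have hdrop : (List.ofFn g).drop ((a : ℕ) + 2) = (List.ofFn f).drop ((a : ℕ) + 2) := by
    apply List.ext_getElem
    · simp
    · intro m hm hm'
      rw [List.getElem_drop, List.getElem_drop, List.getElem_ofFn, List.getElem_ofFn]
      apply hoth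
      · exact fun hc => by simp [Fin.ext_iff] at hc; omega
      · exact fun hc => by simp [Fin.ext_iff, hab] at hc; omega
  rw [key g, key f, htake, hdrop, hp]

/-- For γ = ((i₁ j₁),…,(i_k j_k)) ∈ Σ_n(k) and consecutive positions a, b = a+1:
(a) s_l(γ) ∈ Σ_n(k); (b) the ordered product of the entries is unchanged; (c) writing
s_l(γ) = ((i′₁ j′₁),…,(i′_k j′_k)), the first components are P(γ) permuted by (a b), i.e.
P(s_l(γ)) = σ_l · P(γ); (d) ⋃_m {i′_m, j′_m} = ⋃_m {i_m, j_m}. -/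
theorem stmt17 (n k : ℕ) (i j : Fin k → Fin n) (hij : ∀ l, i l < j l)
    (hγ : (fun l => Equiv.swap (i l) (j l)) ∈ SigmaSet n k)
    (a b : Fin k) (hab : (b : ℕ) = (a : ℕ) + 1) :
    slOp i j a b ∈ SigmaSet n k ∧
    (List.ofFn (slOp i j a b)).prod = (List.ofFn fun m => Equiv.swap (i m) (j m)).prod ∧
    ∃ i' j' : Fin k → Fin n,
      (∀ m, i' m < j' m) ∧
      (∀ m, slOp i j a b m = Equiv.swap (i' m) (j' m)) ∧
      (∀ m, i' m = i (Equiv.swap a b m)) ∧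
      ({x : Fin n | ∃ m, x = i' m ∨ x = j' m} = {x : Fin n | ∃ m, x = i m ∨ x = j m}) := by
  have hA : a ≠ b := fun h => by rw [h] at hab; omega
  have hB : b ≠ a := hA.symm
  -- the positions other than a, b are not modified
  have hoth : ∀ m, m ≠ a → m ≠ b → slOp i j a b m = Equiv.swap (i m) (j m) := by
    intro m hma hmb
    unfold slOp
    split_ifs <;> first
      | rfl
      | exact absurd ‹m = a› hma
      | exact absurd ‹m = b› hmb
  -- the pair product is unchanged
  have hpair : slOp i j a b a * slOp i j a b b
      = Equiv.swap (i a) (j a) * Equiv.swap (i b) (j b) := by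
    unfold slOp
    rcases lt_trichotomy (i a) (i b) with h | h | h
    · simp only [h.ne, if_neg, if_pos h, if_pos rfl, if_neg hB, ite_false, ite_true]
      simp [← mul_assoc, Equiv.swap_mul_self]
    · simp [h]
    · have h1 : ¬ i a = i b := fun hc => by rw [hc] at h; exact lt_irrefl _ h
      have h2 : ¬ i a < i b := not_lt.2 h.le
      simp only [h1, h2, if_neg, if_pos rfl, if_neg hB, ite_false, ite_true]
      simp [mul_assoc, Equiv.swap_mul_self]
  have hprod : (List.ofFn (slOp i j a b)).prod
      = (List.ofFn fun m => Equiv.swap (i m) (j m)).prod :=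
    prodPairAux _ _ a b hab hoth hpair
  -- construct i', j'
  have hmain : ∃ i' j' : Fin k → Fin n,
      (∀ m, i' m < j' m) ∧
      (∀ m, slOp i j a b m = Equiv.swap (i' m) (j' m)) ∧
      (∀ m, i' m = i (Equiv.swap a b m)) ∧
      ({x : Fin n | ∃ m, x = i' m ∨ x = j' m} = {x : Fin n | ∃ m, x = i m ∨ x = j m}) := by
    rcases lt_trichotomy (i a) (i b) with h | h | h
    · -- i a < i b
      set σ := Equiv.swap (i b) (j b) with hσ
      set t := σ (j a) with ht
      have hfix : σ (i a) = i a :=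
        Equiv.swap_apply_of_ne_of_ne (ne_of_lt h) (ne_of_lt (h.trans (hij b)))
      have htcases : j a = i b ∨ j a = j b ∨ t = j a := by
        by_cases h1 : j a = i b
        · exact Or.inl h1
        · by_cases h2 : j a = j b
          · exact Or.inr (Or.inl h2)
          · exact Or.inr (Or.inr (Equiv.swap_apply_of_ne_of_ne h1 h2))
      have htval : t = j b ∨ t = i b ∨ t = j a := by
        rcases htcases with h1 | h1 | h1
        · exact Or.inl (by rw [ht, h1, Equiv.swap_apply_left])
        · exact Or.inr (Or.inl (by rw [ht, h1, Equiv.swap_apply_right]))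
        · exact Or.inr (Or.inr h1)
      have hta : i a < t := by
        rcases htval with h1 | h1 | h1 <;> rw [h1]
        · exact h.trans (hij b)
        · exact h
        · exact hij a
      refine ⟨(fun m => if m = a then i b else if m = b then i a else i m),
              (fun m => if m = a then j b else if m = b then t else j m), ?_, ?_, ?_, ?_⟩
      · intro m
        by_cases hma : m = a
        · simp [hma, hij b]
        · by_cases hmb : m = b
          · simp [hma, hmb, hB, hta]
          · simp [hma, hmb, hij m]
      · intro m
        by_cases hma : m = a
        · simp only [slOp, hma, if_neg h.ne, if_pos h, if_pos rfl, if_true, ite_true]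
        · by_cases hmb : m = b
          · simp only [slOp, hmb, if_neg h.ne, if_pos h, if_neg hB, if_pos rfl, if_true,
              ite_true, ite_false]
            rw [show Equiv.swap (i a) t = Equiv.swap (σ (i a)) (σ (j a)) by rw [hfix],
              Equiv.swap_apply_apply, Equiv.swap_inv]
          · simp only [slOp, if_neg h.ne, if_pos h, if_neg hma, if_neg hmb, ite_false]
      · intro m
        by_cases hma : m = a
        · simp [hma]
        · by_cases hmb : m = b
          · simp [hma, hmb, hB]
          · simp [hma, hmb, Equiv.swap_apply_of_ne_of_ne hma hmb]
      · ext x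
        simp only [Set.mem_setOf_eq]
        constructor
        · rintro ⟨m, hm⟩
          by_cases hma : m = a
          · rw [hma] at hm; simp only [if_pos rfl] at hm
            rcases hm with hm | hm
            · exact ⟨b, Or.inl hm⟩
            · exact ⟨b, Or.inr hm⟩
          · by_cases hmb : m = b
            · rw [hmb] at hm; simp only [if_neg hB, if_pos rfl, ite_false, ite_true] at hm
              rcases hm with hm | hm
              · exact ⟨a, Or.inl hm⟩
              · rcases htval with h1 | h1 | h1
                · exact ⟨b, Or.inr (hm.trans h1)⟩
                · exact ⟨b, Or.inl (hm.trans h1)⟩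
                · exact ⟨a, Or.inr (hm.trans h1)⟩
            · rw [if_neg hma, if_neg hmb, if_neg hma, if_neg hmb] at hm
              exact ⟨m, hm⟩
        · rintro ⟨m, hm⟩
          by_cases hma : m = a
          · rw [hma] at hm
            rcases hm with hm | hm
            · exact ⟨b, by simp [hB, hm]⟩
            · rcases htcases with h1 | h1 | h1
              · exact ⟨a, Or.inl (by simp [hm, h1])⟩
              · exact ⟨a, Or.inr (by simp [hm, h1])⟩
              · exact ⟨b, Or.inr (by simp [hB, hm, h1.symm])⟩
          · by_cases hmb : m = b
            · rw [hmb] at hm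
              rcases hm with hm | hm
              · exact ⟨a, Or.inl (by simp [hm])⟩
              · exact ⟨a, Or.inr (by simp [hm])⟩
            · exact ⟨m, by simpa [hma, hmb] using hm⟩
    · -- i a = i b
      refine ⟨i, j, hij, ?_, ?_, rfl⟩
      · intro m; simp [slOp, h]
      · intro m
        by_cases hma : m = a
        · simp [hma, h]
        · by_cases hmb : m = b
          · simp [hma, hmb, hB, h]
          · simp [hma, hmb, Equiv.swap_apply_of_ne_of_ne hma hmb]
    · -- i b < i a
      have h1 : ¬ i a = i b := fun hc => by rw [hc] at h; exact lt_irrefl _ h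
      have h2 : ¬ i a < i b := not_lt.2 h.le
      set σ := Equiv.swap (i a) (j a) with hσ
      set t := σ (j b) with ht
      have hfix : σ (i b) = i b :=
        Equiv.swap_apply_of_ne_of_ne (ne_of_lt h) (ne_of_lt (h.trans (hij a)))
      have htcases : j b = i a ∨ j b = j a ∨ t = j b := by
        by_cases hc1 : j b = i a
        · exact Or.inl hc1
        · by_cases hc2 : j b = j a
          · exact Or.inr (Or.inl hc2)
          · exact Or.inr (Or.inr (Equiv.swap_apply_of_ne_of_ne hc1 hc2))
      have htval : t = j a ∨ t = i a ∨ t = j b := by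
        rcases htcases with hc | hc | hc
        · exact Or.inl (by rw [ht, hc, Equiv.swap_apply_left])
        · exact Or.inr (Or.inl (by rw [ht, hc, Equiv.swap_apply_right]))
        · exact Or.inr (Or.inr hc)
      have htb : i b < t := by
        rcases htval with hc | hc | hc <;> rw [hc]
        · exact h.trans (hij a)
        · exact h
        · exact hij b
      refine ⟨(fun m => if m = a then i b else if m = b then i a else i m),
              (fun m => if m = a then t else if m = b then j a else j m), ?_, ?_, ?_, ?_⟩
      · intro m
        by_cases hma : m = a
        · simp [hma, htb]
        · by_cases hmb : m = b
          · simp [hma, hmb, hB, hij a]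
          · simp [hma, hmb, hij m]
      · intro m
        by_cases hma : m = a
        · simp only [slOp, hma, if_neg h1, if_neg h2, if_pos rfl, if_true, ite_true, ite_false]
          rw [show Equiv.swap (i b) t = Equiv.swap (σ (i b)) (σ (j b)) by rw [hfix],
            Equiv.swap_apply_apply, Equiv.swap_inv]
        · by_cases hmb : m = b
          · simp only [slOp, hmb, if_neg h1, if_neg h2, if_neg hB, if_pos rfl, if_true,
              ite_false, ite_true]
          · simp only [slOp, if_neg h1, if_neg h2, if_neg hma, if_neg hmb, ite_false]
      · intro m
        by_cases hma : m = a
        · simp [hma]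
        · by_cases hmb : m = b
          · simp [hma, hmb, hB]
          · simp [hma, hmb, Equiv.swap_apply_of_ne_of_ne hma hmb]
      · ext x
        simp only [Set.mem_setOf_eq]
        constructor
        · rintro ⟨m, hm⟩
          by_cases hma : m = a
          · rw [hma] at hm; simp only [if_pos rfl] at hm
            rcases hm with hm | hm
            · exact ⟨b, Or.inl hm⟩
            · rcases htval with hc | hc | hc
              · exact ⟨a, Or.inr (hm.trans hc)⟩
              · exact ⟨a, Or.inl (hm.trans hc)⟩
              · exact ⟨b, Or.inr (hm.trans hc)⟩
          · by_cases hmb : m = b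
            · rw [hmb] at hm; simp only [if_neg hB, if_pos rfl, ite_false, ite_true] at hm
              rcases hm with hm | hm
              · exact ⟨a, Or.inl hm⟩
              · exact ⟨a, Or.inr hm⟩
            · rw [if_neg hma, if_neg hmb, if_neg hma, if_neg hmb] at hm
              exact ⟨m, hm⟩
        · rintro ⟨m, hm⟩
          by_cases hma : m = a
          · rw [hma] at hm
            rcases hm with hm | hm
            · exact ⟨b, Or.inl (by simp [hB, hm])⟩
            · exact ⟨b, Or.inr (by simp [hB, hm])⟩
          · by_cases hmb : m = b
            · rw [hmb] at hm
              rcases hm with hm | hm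
              · exact ⟨a, Or.inl (by simp [hm])⟩
              · rcases htcases with hc | hc | hc
                · exact ⟨b, Or.inl (by simp [hB, hm, hc])⟩
                · exact ⟨b, Or.inr (by simp [hB, hm, hc])⟩
                · exact ⟨a, Or.inr (by simp [hm, hc.symm])⟩
            · exact ⟨m, by simpa [hma, hmb] using hm⟩
  obtain ⟨i', j', hlt, hs, hi', hset⟩ := hmain
  obtain ⟨hsw, hnorm, hprec⟩ := hγ
  refine ⟨⟨fun l => ⟨i' l, j' l, (hlt l).ne, hs l⟩, ?_, ?_⟩, hprod, i', j', hlt, hs, hi', hset⟩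
  · rw [hprod]; exact hnorm
  · rw [hprod]; exact hprec
end

section
/- Let E = (e₁,…,e_k) ∈ {1,…,n}^k and O ⊆ {1,…,n} with |O| = k+1, and suppose that the residue satisfies ρ(E,O) = 1. Then, writing Π(E,O) = (p₁,…,p_k), one has e_l < p_l for every l ∈ {1,…,k}. -/
lemma rot_pow_val (m r : ℕ) (x : Fin (m + 1)) :
    ((((finRotate (m + 1))) ^ r) x).val = (x.val + r) % (m + 1) := by
  induction r with
  | zero => simp [Nat.mod_eq_of_lt x.isLt]
  | succ r ih =>
    rw [pow_succ', Equiv.Perm.mul_apply, finRotate_succ_apply, Fin.val_add, ih,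
      Fin.val_one', Nat.mod_add_mod, Nat.add_mod_mod, Nat.add_assoc]

/-- The parking process: given entry points e₁,…,e_k ∈ {1,…,n} and a set O of k+1 open
spaces, the parking spaces p_k, p_{k−1}, …, p₁ are defined by downward recursion:
p_l = c^r(e_l) where r = min{s ∈ {1,…,n} : c^s(e_l) ∈ O \ {p_{l+1},…,p_k}}, with
c = (1 2 … n) realised as `finRotate n`. If the residue (the unique element of
O \ {p₁,…,p_k}) equals 1 (realised as `(⟨0, hn⟩ : Fin n)`), then e_l < p_l for all l. -/
theorem stmt19 (n k : ℕ) (hn : 0 < n) (e : Fin k → Fin n)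
    (O : Finset (Fin n)) (hO : O.card = k + 1)
    (p : Fin k → Fin n)
    (hp : ∀ l : Fin k, ∃ r : ℕ, 1 ≤ r ∧ r ≤ n ∧
      p l = ((finRotate n) ^ r) (e l) ∧
      p l ∈ O ∧ (∀ m : Fin k, l < m → p l ≠ p m) ∧
      (∀ s : ℕ, 1 ≤ s → s < r →
        ¬ (((finRotate n) ^ s) (e l) ∈ O ∧
            ∀ m : Fin k, l < m → ((finRotate n) ^ s) (e l) ≠ p m)))
    (hres : (⟨0, hn⟩ : Fin n) ∈ O ∧ ∀ l, p l ≠ ⟨0, hn⟩) :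
    ∀ l, e l < p l := by
  obtain ⟨m, rfl⟩ : ∃ m, n = m + 1 := ⟨n - 1, by omega⟩
  intro l
  obtain ⟨r, hr1, hrn, hplr, hpO, hdist, hmin⟩ := hp l
  set x := (e l).val with hx
  have hxm : x ≤ m := Nat.lt_succ_iff.mp (e l).isLt
  have hpval : (p l).val = (x + r) % (m + 1) := by rw [hplr, rot_pow_val]
  by_cases hwrap : x + r ≤ m
  · have : (p l).val = x + r := by rw [hpval]; exact Nat.mod_eq_of_lt (by omega)
    exact Fin.lt_def.mpr (by omega)
  · exfalso
    set s0 := m + 1 - x with hs0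
    have hs01 : 1 ≤ s0 := by omega
    have hs0r : s0 ≤ r := by omega
    have hzero : ((finRotate (m + 1)) ^ s0) (e l) = ⟨0, hn⟩ := by
      apply Fin.ext
      rw [rot_pow_val]
      have hxs : (e l).val + s0 = m + 1 := by omega
      rw [hxs, Nat.mod_self]
    rcases lt_or_eq_of_le hs0r with h | h
    · exact hmin s0 hs01 h ⟨by rw [hzero]; exact hres.1,
        fun m' hm' => by rw [hzero]; exact fun heq => hres.2 m' heq.symm⟩
    · apply hres.2 l
      apply Fin.ext
      have hxr : x + r = m + 1 := by omega
      rw [hpval, hxr, Nat.mod_self]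
end
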